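/- If K is the δ(w)-core of a graphon w, and S_ε = {x ∈ K : ∫_K w'(x,y) dy < δ(w) − ε} for another graphon w' with ε = √(d_□(w,w')) > 0, then |S_ε| < √(d_□(w,w')). -/

import Mathlib

open MeasureTheory Set Filter Topology

/-- A graphon: symmetric measurable `w : [0,1]² → [0,1]` (stated on all of ℝ²). -/
def Graphon (w : ℝ → ℝ → ℝ) : Prop :=
  Measurable (Function.uncurry w) ∧ (∀ x y, w x y = w y x) ∧
    ∀ x y, w x y ∈ Set.Icc (0 : ℝ) 1

/-- Degree of `x` restricted to `K`: `d_w^K(x) = ∫_K w(x,y) dy`. -/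
noncomputable def degK (w : ℝ → ℝ → ℝ) (K : Set ℝ) (x : ℝ) : ℝ := ∫ y in K, w x y

/-- Iterated peeling sets: `coreIter w κ n = K^{n+1}_κ(w)` (so index 0 is `K¹`). -/
noncomputable def coreIter (w : ℝ → ℝ → ℝ) (κ : ℝ) : ℕ → Set ℝ
  | 0 => {x ∈ Set.Icc (0 : ℝ) 1 | κ ≤ degK w (Set.Icc 0 1) x}
  | n + 1 => {x ∈ coreIter w κ n | κ ≤ degK w (coreIter w κ n) x}

/-- The κ-core `K_κ(w) = ⋂ₙ K^n_κ(w)`. -/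
noncomputable def core (w : ℝ → ℝ → ℝ) (κ : ℝ) : Set ℝ := ⋂ n, coreIter w κ n

/-- Shell index `δ_x(w) = sup {κ : x ∈ K_κ(w)}`. -/
noncomputable def shell (w : ℝ → ℝ → ℝ) (x : ℝ) : ℝ := sSup {κ | x ∈ core w κ}

/-- Degeneracy `δ(w) = sup {κ : |K_κ(w)| > 0}`. -/
noncomputable def degen (w : ℝ → ℝ → ℝ) : ℝ := sSup {κ | 0 < volume (core w κ)}

/-- Cut-norm distance `d_□`. -/
noncomputable def cutDist (w w' : ℝ → ℝ → ℝ) : ℝ :=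
  sSup {r | ∃ S T : Set ℝ, MeasurableSet S ∧ MeasurableSet T ∧
    S ⊆ Set.Icc 0 1 ∧ T ⊆ Set.Icc 0 1 ∧
    r = |∫ x in S, ∫ y in T, (w x y - w' x y)|}

/-- A measure-preserving map of `[0,1]`. -/
def MPMap (σ : ℝ → ℝ) : Prop :=
  Measurable σ ∧ Set.MapsTo σ (Set.Icc 0 1) (Set.Icc 0 1) ∧
    ∀ A : Set ℝ, MeasurableSet A → A ⊆ Set.Icc 0 1 →
      volume (σ ⁻¹' A ∩ Set.Icc 0 1) = volume A

/-- Cut metric `δ_□(w,w') = inf_σ d_□(w^σ, w')`. -/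
noncomputable def cutMetric (w w' : ℝ → ℝ → ℝ) : ℝ :=
  sInf {r | ∃ σ : ℝ → ℝ, MPMap σ ∧ r = cutDist (fun x y => w (σ x) (σ y)) w'}

section Aux
variable {w w' : ℝ → ℝ → ℝ}

lemma graphon_meas_right (hw : Graphon w) (x : ℝ) : Measurable (w x) :=
  hw.1.comp measurable_prodMk_left

lemma graphon_intOn (hw : Graphon w) (x : ℝ) {A : Set ℝ} (hA : volume A ≠ ⊤) :
    IntegrableOn (w x) A := by
  refine Integrable.mono'
    (integrableOn_const hA : IntegrableOn (fun _ => (1:ℝ)) A volume)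
    (graphon_meas_right hw x).aestronglyMeasurable ?_
  filter_upwards with y
  rw [Real.norm_eq_abs, abs_le]
  exact ⟨by linarith [(hw.2.2 x y).1], (hw.2.2 x y).2⟩

lemma graphon_setIntegral_le (hw : Graphon w) (x : ℝ) {A : Set ℝ}
    (hA : MeasurableSet A) (hA' : volume A ≠ ⊤) :
    ∫ y in A, w x y ≤ (volume A).toReal := by
  calc ∫ y in A, w x y ≤ ∫ _ in A, (1:ℝ) :=
        setIntegral_mono_on (graphon_intOn hw x hA')
          (integrableOn_const hA') hA (fun y _ => (hw.2.2 x y).2)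
    _ = (volume A).toReal := by simp [Measure.real]

lemma degK_measurable (hw : Graphon w) (K : Set ℝ) : Measurable (degK w K) := by
  unfold degK
  exact (hw.1.stronglyMeasurable.integral_prod_right (ν := volume.restrict K)).measurable

lemma coreIter_subset (w : ℝ → ℝ → ℝ) (κ : ℝ) : ∀ n, coreIter w κ n ⊆ Set.Icc 0 1
  | 0 => sep_subset _ _
  | n + 1 => (sep_subset _ _).trans (coreIter_subset w κ n)

lemma coreIter_meas (hw : Graphon w) (κ : ℝ) : ∀ n, MeasurableSet (coreIter w κ n)
  | 0 => measurableSet_Icc.inter (measurableSet_le measurable_const (degK_measurable hw _))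
  | n + 1 => (coreIter_meas hw κ n).inter
      (measurableSet_le measurable_const (degK_measurable hw _))

lemma coreIter_anti (w : ℝ → ℝ → ℝ) (κ : ℝ) : Antitone (coreIter w κ) :=
  antitone_nat_of_succ_le fun n => sep_subset _ _

lemma core_subset (w : ℝ → ℝ → ℝ) (κ : ℝ) : core w κ ⊆ Set.Icc 0 1 :=
  (iInter_subset _ 0).trans (coreIter_subset w κ 0)

lemma core_meas (hw : Graphon w) (κ : ℝ) : MeasurableSet (core w κ) :=
  MeasurableSet.iInter (coreIter_meas hw κ)

lemma vol_ne_top_of_sub {A : Set ℝ} (h : A ⊆ Set.Icc 0 1) : volume A ≠ ⊤ :=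
  ((measure_mono h).trans_lt (by simp)).ne

lemma degK_core_ge (hw : Graphon w) {κ x : ℝ} (hx : x ∈ core w κ) :
    κ ≤ degK w (core w κ) x := by
  have hKn := coreIter_meas hw κ
  have hKmeas : MeasurableSet (core w κ) := core_meas hw κ
  have hKfin : volume (core w κ) ≠ ⊤ := vol_ne_top_of_sub (core_subset w κ)
  have hstep : ∀ n, κ ≤ degK w (core w κ) x
      + (volume (coreIter w κ n \ core w κ)).toReal := by
    intro n
    have hmem : x ∈ coreIter w κ (n+1) := mem_iInter.1 hx (n+1)
    have h1 : κ ≤ degK w (coreIter w κ n) x := hmem.2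
    have hsub : core w κ ⊆ coreIter w κ n := iInter_subset _ n
    have hdfin : volume (coreIter w κ n \ core w κ) ≠ ⊤ :=
      vol_ne_top_of_sub (diff_subset.trans (coreIter_subset w κ n))
    have hsplit : degK w (coreIter w κ n) x = degK w (core w κ) x
        + ∫ y in coreIter w κ n \ core w κ, w x y := by
      have hu := setIntegral_union (μ := volume) (f := w x) disjoint_sdiff_right
        ((hKn n).diff hKmeas) (graphon_intOn hw x hKfin) (graphon_intOn hw x hdfin)
      rw [union_diff_cancel hsub] at hu
      exact hu
    have h2 : ∫ y in coreIter w κ n \ core w κ, w x y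
        ≤ (volume (coreIter w κ n \ core w κ)).toReal :=
      graphon_setIntegral_le hw x ((hKn n).diff hKmeas) hdfin
    linarith [hsplit ▸ h1]
  have h0 : Tendsto (fun n => volume (coreIter w κ n \ core w κ)) atTop (𝓝 0) := by
    have := tendsto_measure_iInter_atTop (μ := volume)
      (s := fun n => coreIter w κ n \ core w κ)
      (fun n => ((hKn n).diff hKmeas).nullMeasurableSet)
      (fun m n h => diff_subset_diff_left (coreIter_anti w κ h))
      ⟨0, vol_ne_top_of_sub (diff_subset.trans (coreIter_subset w κ 0))⟩
    have key : (⋂ n, coreIter w κ n \ core w κ) = ∅ := by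
      ext y
      simp only [mem_iInter, mem_diff, mem_empty_iff_false, iff_false, not_forall]
      by_contra h
      push_neg at h
      exact (h 0).2 (mem_iInter.2 fun n => (h n).1)
    rw [key, measure_empty] at this
    exact this
  have htend : Tendsto (fun n => (volume (coreIter w κ n \ core w κ)).toReal) atTop (𝓝 0) := by
    simpa [Function.comp_def] using (ENNReal.tendsto_toReal (by simp)).comp h0
  have : Tendsto (fun n => degK w (core w κ) x
      + (volume (coreIter w κ n \ core w κ)).toReal) atTop (𝓝 (degK w (core w κ) x)) := by
    simpa using htend.const_add (degK w (core w κ) x)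
  exact ge_of_tendsto' this hstep
end Aux

section Aux2
variable {w w' : ℝ → ℝ → ℝ}

lemma toReal_le_one {A : Set ℝ} (h : A ⊆ Set.Icc 0 1) : (volume A).toReal ≤ 1 := by
  have h1 : volume A ≤ 1 := by
    have := measure_mono (μ := volume) h
    simpa using this
  simpa using ENNReal.toReal_mono (by simp) h1

lemma sub_intOn (hw : Graphon w) (hw' : Graphon w') (x : ℝ) {A : Set ℝ}
    (hA : volume A ≠ ⊤) : IntegrableOn (fun y => w x y - w' x y) A :=
  (graphon_intOn hw x hA).sub (graphon_intOn hw' x hA)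

lemma abs_sub_le_one (hw : Graphon w) (hw' : Graphon w') (x y : ℝ) :
    ‖w x y - w' x y‖ ≤ 1 := by
  rw [Real.norm_eq_abs, abs_le]
  obtain ⟨h1, h2⟩ := hw.2.2 x y
  obtain ⟨h3, h4⟩ := hw'.2.2 x y
  constructor <;> linarith

lemma inner_meas (hw : Graphon w) (hw' : Graphon w') (T : Set ℝ) :
    Measurable (fun x => ∫ y in T, (w x y - w' x y)) := by
  have hm : Measurable (Function.uncurry (fun x y => w x y - w' x y)) := hw.1.sub hw'.1
  exact (hm.stronglyMeasurable.integral_prod_right (ν := volume.restrict T)).measurable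

lemma cutDist_bdd (hw : Graphon w) (hw' : Graphon w') :
    BddAbove {r | ∃ S T : Set ℝ, MeasurableSet S ∧ MeasurableSet T ∧
      S ⊆ Set.Icc 0 1 ∧ T ⊆ Set.Icc 0 1 ∧
      r = |∫ x in S, ∫ y in T, (w x y - w' x y)|} := by
  refine ⟨1, fun r hr => ?_⟩
  obtain ⟨S, T, hS, hT, hS1, hT1, rfl⟩ := hr
  have hTfin : volume T ≠ ⊤ := vol_ne_top_of_sub hT1
  have hSfin : volume S ≠ ⊤ := vol_ne_top_of_sub hS1
  have hin : ∀ x : ℝ, ‖∫ y in T, (w x y - w' x y)‖ ≤ 1 := by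
    intro x
    have := norm_setIntegral_le_of_norm_le_const (C := 1) hTfin.lt_top
      (fun y _ => abs_sub_le_one hw hw' x y)
    calc ‖∫ y in T, (w x y - w' x y)‖ ≤ 1 * (volume T).toReal := this
      _ ≤ 1 := by rw [one_mul]; exact toReal_le_one hT1
  have hout := norm_setIntegral_le_of_norm_le_const (C := 1) hSfin.lt_top
    (fun x _ => hin x)
  rw [Real.norm_eq_abs] at hout
  calc |∫ x in S, ∫ y in T, (w x y - w' x y)| ≤ 1 * (volume S).toReal := hout
    _ ≤ 1 := by rw [one_mul]; exact toReal_le_one hS1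

lemma cutDist_nonneg (hw : Graphon w) (hw' : Graphon w') : 0 ≤ cutDist w w' :=
  le_csSup (cutDist_bdd hw hw')
    ⟨∅, ∅, MeasurableSet.empty, MeasurableSet.empty, empty_subset _, empty_subset _, by simp⟩

lemma le_cutDist (hw : Graphon w) (hw' : Graphon w') {S T : Set ℝ}
    (hS : MeasurableSet S) (hT : MeasurableSet T)
    (hS1 : S ⊆ Set.Icc 0 1) (hT1 : T ⊆ Set.Icc 0 1) :
    ∫ x in S, ∫ y in T, (w x y - w' x y) ≤ cutDist w w' :=
  (le_abs_self _).trans (le_csSup (cutDist_bdd hw hw') ⟨S, T, hS, hT, hS1, hT1, rfl⟩)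

lemma degK_norm_le (hw : Graphon w) {K : Set ℝ} (hK : MeasurableSet K)
    (hK1 : K ⊆ Set.Icc 0 1) (x : ℝ) : ‖degK w K x‖ ≤ 1 := by
  rw [Real.norm_eq_abs, abs_le]
  constructor
  · have : 0 ≤ degK w K x := setIntegral_nonneg hK (fun y _ => (hw.2.2 x y).1)
    linarith
  · exact (graphon_setIntegral_le hw x hK (vol_ne_top_of_sub hK1)).trans (toReal_le_one hK1)

lemma degK_intOn (hw : Graphon w) {K S : Set ℝ} (hK : MeasurableSet K)
    (hK1 : K ⊆ Set.Icc 0 1) (hS : volume S ≠ ⊤) :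
    IntegrableOn (degK w K) S := by
  refine Integrable.mono'
    (integrableOn_const hS : IntegrableOn (fun _ => (1:ℝ)) S volume)
    (degK_measurable hw K).aestronglyMeasurable ?_
  filter_upwards with x
  exact degK_norm_le hw hK hK1 x

end Aux2


theorem stmt16 (w w' : ℝ → ℝ → ℝ) (hw : Graphon w) (hw' : Graphon w')
    (hε : 0 < Real.sqrt (cutDist w w'))
    (hεδ : Real.sqrt (cutDist w w') < degen w) :
    volume {x ∈ core w (degen w) |
        degK w' (core w (degen w)) x < degen w - Real.sqrt (cutDist w w')}
      < ENNReal.ofReal (Real.sqrt (cutDist w w')) := by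
  set ε := Real.sqrt (cutDist w w') with hεdef
  set δ := degen w with hδdef
  set K := core w δ with hKdef
  set S := {x ∈ K | degK w' K x < δ - ε} with hSdef
  have hKmeas : MeasurableSet K := core_meas hw δ
  have hKsub : K ⊆ Set.Icc 0 1 := core_subset w δ
  have hKfin : volume K ≠ ⊤ := vol_ne_top_of_sub hKsub
  have hSmeas : MeasurableSet S :=
    hKmeas.inter (measurableSet_lt (degK_measurable hw' K) measurable_const)
  have hSsub : S ⊆ Set.Icc 0 1 := (sep_subset _ _).trans hKsub
  have hSfin : volume S ≠ ⊤ := vol_ne_top_of_sub hSsub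
  rcases eq_or_ne (volume S) 0 with h0 | h0
  · rw [h0]
    exact ENNReal.ofReal_pos.2 hε
  · have hvolpos : 0 < volume S := pos_iff_ne_zero.2 h0
    have hintw : IntegrableOn (degK w K) S := degK_intOn hw hKmeas hKsub hSfin
    have hintw' : IntegrableOn (degK w' K) S := degK_intOn hw' hKmeas hKsub hSfin
    set F : ℝ → ℝ := fun x => degK w K x - degK w' K x with hFdef
    have hF : IntegrableOn F S := hintw.sub hintw'
    have hconst : IntegrableOn (fun _ => ε) S volume :=
      integrableOn_const hSfin
    have hposS : ∀ x ∈ S, 0 < F x - ε := by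
      intro x hx
      have h1 : δ ≤ degK w K x := degK_core_ge hw hx.1
      have h2 : degK w' K x < δ - ε := hx.2
      simp only [hFdef]
      linarith
    have hpos : 0 < ∫ x in S, (F x - ε) := by
      rw [setIntegral_pos_iff_support_of_nonneg_ae
        ((ae_restrict_iff' hSmeas).2 (Eventually.of_forall fun x hx => (hposS x hx).le))
        (hF.sub hconst)]
      have heq : (Function.support fun x => F x - ε) ∩ S = S :=
        inter_eq_self_of_subset_right (fun x hx => (hposS x hx).ne')
      rw [heq]
      exact hvolpos
    have hsplit : ∫ x in S, (F x - ε) = (∫ x in S, F x) - ε * (volume S).toReal := by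
      rw [integral_sub hF hconst, setIntegral_const, smul_eq_mul]
      simp only [Measure.real]
      ring
    have hswap : ∫ x in S, F x = ∫ x in S, ∫ y in K, (w x y - w' x y) := by
      refine setIntegral_congr_fun hSmeas (fun x _ => ?_)
      exact (integral_sub (graphon_intOn hw x hKfin) (graphon_intOn hw' x hKfin)).symm
    have hle : ∫ x in S, F x ≤ ε * ε := by
      rw [hswap]
      have h := le_cutDist hw hw' hSmeas hKmeas hSsub hKsub
      have hsq : ε * ε = cutDist w w' := Real.mul_self_sqrt (cutDist_nonneg hw hw')
      linarith
    have htlt : (volume S).toReal < ε := by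
      have hlt : ε * (volume S).toReal < ε * ε := by
        rw [hsplit] at hpos
        linarith
      exact (mul_lt_mul_iff_right₀ hε).1 hlt
    exact (ENNReal.lt_ofReal_iff_toReal_lt hSfin).2 htlt
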